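/- Assume (H3) and let Ξ and f̂ be as in the context. Then: (i) ‖f̂(ψ)‖₁ ≤ 2c‖ψ‖₁ for every ψ ∈ X; (ii) for every ρ > 0, setting C_ρ = 2(c + 2ρ‖k‖_∞), one has ‖f̂(ψ) − f̂(φ)‖₁ ≤ C_ρ‖ψ − φ‖₁ for every ψ, φ ∈ X with ‖φ‖₁ ≤ ρ. -/

import Mathlib

open MeasureTheory Set

noncomputable section

/-- `ℝ³` with the `ℓ¹` norm. -/
abbrev V3 : Type := PiLp 1 fun _ : Fin 3 => ℝ

/-- The state space `X = L¹([0,ω],ℝ³)` with norm `‖ψ‖₁ = ‖ψ₁‖₁+‖ψ₂‖₁+‖ψ₃‖₁`. -/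
abbrev XX (ω : ℝ) := Lp (α := ℝ) V3 1 (volume.restrict (Icc (0:ℝ) ω))

/-- `M` is the essential supremum of `|k|` on `[0,ω]²`. -/
def IsEssSupSq (ω : ℝ) (k : ℝ → ℝ → ℝ) (M : ℝ) : Prop :=
  (∀ᵐ z ∂((volume.restrict (Icc (0:ℝ) ω)).prod (volume.restrict (Icc (0:ℝ) ω))),
      |k z.1 z.2| ≤ M) ∧
    ∀ C : ℝ,
      (∀ᵐ z ∂((volume.restrict (Icc (0:ℝ) ω)).prod (volume.restrict (Icc (0:ℝ) ω))),
        |k z.1 z.2| ≤ C) → M ≤ C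

/-- The force of infection `Λ(a,ζ) = ∫₀^ω k(a,σ)ζ(σ)dσ`. -/
def Lam (ω : ℝ) (k : ℝ → ℝ → ℝ) (ζ : ℝ → ℝ) (a : ℝ) : ℝ :=
  ∫ σ in Icc (0:ℝ) ω, k a σ * ζ σ

/-- Pointwise values of the nonlinearity `f(ψ)(a) = (−Λ(a,ψ₂)ψ₁(a), Λ(a,ψ₂)ψ₁(a), 0)`. -/
def fval (ω : ℝ) (k : ℝ → ℝ → ℝ) (g : ℝ → V3) (a : ℝ) : Fin 3 → ℝ :=
  ![-(Lam ω k (fun σ => g σ 1) a) * g a 0,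
     (Lam ω k (fun σ => g σ 1) a) * g a 0, 0]


/-- Pointwise values of the truncated nonlinearity
`f̂(ψ)(a) = (−Ξ(Λ(a,ψ₂))ψ₁(a), Ξ(Λ(a,ψ₂))ψ₁(a), 0)`. -/
def fhatval (ω : ℝ) (k : ℝ → ℝ → ℝ) (Ξ : ℝ → ℝ) (g : ℝ → V3) (a : ℝ) : Fin 3 → ℝ :=
  ![-(Ξ (Lam ω k (fun σ => g σ 1) a)) * g a 0,
     (Ξ (Lam ω k (fun σ => g σ 1) a)) * g a 0, 0]


/-! Pointwise, `f̂(ψ)(a) = (-t, t, 0)` with `t = Ξ(Λ(a,ψ₂)) ψ₁(a)`, whose `ℓ¹` norm is `2|t|`.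
Growth follows from `|Ξ| ≤ c`. For the Lipschitz bound split
`Ξ(u)x - Ξ(v)y = Ξ(u)(x - y) + (Ξ(u) - Ξ(v))y`: the first term is at most `c|x - y|`, and since
`Ξ` is `2`-Lipschitz and `|Λ(a,ψ₂) - Λ(a,φ₂)| ≤ ‖k‖_∞ ‖ψ - φ‖₁`, the second is at most
`2‖k‖_∞ ‖ψ - φ‖₁ |φ₁(a)|`, which integrates to at most `2ρ‖k‖_∞ ‖ψ - φ‖₁`. -/

section

variable {α : Type*} [MeasurableSpace α] {μ : Measure α}

theorem L1.norm_le_integral_of_ae_norm_le {E : Type*} [NormedAddCommGroup E] {f : α →₁[μ] E}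
    {g : α → ℝ} (hg : Integrable g μ) (h : ∀ᵐ x ∂μ, ‖f x‖ ≤ g x) : ‖f‖ ≤ ∫ x, g x ∂μ :=
  (L1.norm_eq_integral_norm f).trans_le (integral_mono_ae (L1.integrable_coeFn f).norm hg h)

theorem abs_integral_mul_le_of_ae_abs_le {κ ζ g : α → ℝ} {M : ℝ} (hM : 0 ≤ M)
    (hκ : ∀ᵐ x ∂μ, |κ x| ≤ M) (hζ : ∀ᵐ x ∂μ, |ζ x| ≤ g x) (hg : Integrable g μ) :
    |∫ x, κ x * ζ x ∂μ| ≤ M * ∫ x, g x ∂μ := by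
  rw [← integral_const_mul, ← Real.norm_eq_abs]
  refine norm_integral_le_of_norm_le (hg.const_mul M) ?_
  filter_upwards [hκ, hζ] with x hκx hζx
  rw [Real.norm_eq_abs, abs_mul]
  exact mul_le_mul hκx hζx (abs_nonneg _) hM

theorem nonneg_of_ae_abs_le [NeZero μ] {f : α → ℝ} {M : ℝ} (h : ∀ᵐ x ∂μ, |f x| ≤ M) : 0 ≤ M :=
  let ⟨_, hx⟩ := h.exists
  (abs_nonneg _).trans hx

end

theorem abs_mul_sub_mul_le_of_lipschitzWith {Ξ : ℝ → ℝ} {c : ℝ} {L : NNReal}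
    (hbdd : ∀ z, |Ξ z| ≤ c) (hlip : LipschitzWith L Ξ) (u v x y : ℝ) :
    |Ξ u * x - Ξ v * y| ≤ c * |x - y| + L * |u - v| * |y| := by
  have hΞ : |Ξ u - Ξ v| ≤ L * |u - v| := by
    simpa only [Real.dist_eq] using hlip.dist_le_mul u v
  calc |Ξ u * x - Ξ v * y| = |Ξ u * (x - y) + (Ξ u - Ξ v) * y| := by
        congr 1; ring
    _ ≤ |Ξ u| * |x - y| + |Ξ u - Ξ v| * |y| := by
        rw [← abs_mul, ← abs_mul]; exact abs_add_le _ _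
    _ ≤ c * |x - y| + L * |u - v| * |y| := by
        gcongr
        exact hbdd u

theorem norm_toLp_neg_self_zero (t : ℝ) : ‖(WithLp.toLp 1 ![-t, t, 0] : V3)‖ = 2 * |t| := by
  rw [PiLp.norm_eq_sum (by norm_num)]
  simp [Fin.sum_univ_three]
  ring

theorem XX.integrable_apply (ω : ℝ) (ψ : XX ω) (i : Fin 3) :
    Integrable (fun a => ψ a i) (volume.restrict (Icc (0:ℝ) ω)) :=
  ContinuousLinearMap.integrable_comp (PiLp.proj (𝕜 := ℝ) 1 (fun _ : Fin 3 => ℝ) i)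
    (L1.integrable_coeFn ψ)

theorem Lam_sub {ω : ℝ} {k : ℝ → ℝ → ℝ} {a M : ℝ} (hka : Measurable (k a))
    (hbd : ∀ᵐ σ ∂(volume.restrict (Icc (0:ℝ) ω)), |k a σ| ≤ M) {ζ ξ : ℝ → ℝ}
    (hζ : IntegrableOn ζ (Icc 0 ω)) (hξ : IntegrableOn ξ (Icc 0 ω)) :
    Lam ω k ζ a - Lam ω k ξ a = Lam ω k (ζ - ξ) a := by
  have hint : ∀ {η : ℝ → ℝ}, IntegrableOn η (Icc 0 ω) →
      IntegrableOn (fun σ => k a σ * η σ) (Icc 0 ω) := fun hη =>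
    hη.bdd_mul hka.aestronglyMeasurable (by simpa only [Real.norm_eq_abs] using hbd)
  simp only [Lam, ← integral_sub (hint hζ) (hint hξ), Pi.sub_apply, mul_sub]

theorem abs_Lam_sub_le {ω : ℝ} {k : ℝ → ℝ → ℝ} {a M : ℝ} (hM : 0 ≤ M) (hka : Measurable (k a))
    (hbd : ∀ᵐ σ ∂(volume.restrict (Icc (0:ℝ) ω)), |k a σ| ≤ M) (ψ φ : XX ω) :
    |Lam ω k (fun σ => ψ σ 1) a - Lam ω k (fun σ => φ σ 1) a| ≤ M * ‖ψ - φ‖ := by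
  rw [Lam_sub hka hbd (XX.integrable_apply ω ψ 1) (XX.integrable_apply ω φ 1),
    L1.norm_eq_integral_norm]
  refine abs_integral_mul_le_of_ae_abs_le hM hbd ?_ (L1.integrable_coeFn _).norm
  filter_upwards [Lp.coeFn_sub ψ φ] with σ hσ
  rw [hσ]
  exact PiLp.norm_apply_le (ψ σ - φ σ) 1

/-- The amplitude `t` of `f̂(ψ)(a) = (-t, t, 0)`. -/
def fhatAmp (ω : ℝ) (k : ℝ → ℝ → ℝ) (Ξ : ℝ → ℝ) (g : ℝ → V3) (a : ℝ) : ℝ :=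
  Ξ (Lam ω k (fun σ => g σ 1) a) * g a 0

theorem ae_eq_toLp_fhatAmp {ω : ℝ} {k : ℝ → ℝ → ℝ} {Ξ : ℝ → ℝ} {F : XX ω → XX ω}
    (hF : ∀ ψ : XX ω, ∀ᵐ a ∂(volume.restrict (Icc (0:ℝ) ω)),
      ∀ i : Fin 3, (F ψ) a i = fhatval ω k Ξ (⇑ψ) a i) (ψ : XX ω) :
    ∀ᵐ a ∂(volume.restrict (Icc (0:ℝ) ω)),
      (F ψ) a = WithLp.toLp 1 ![-fhatAmp ω k Ξ ψ a, fhatAmp ω k Ξ ψ a, 0] := by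
  filter_upwards [hF ψ] with a ha
  ext i
  rw [ha]
  fin_cases i <;> simp [fhatval, fhatAmp]

theorem toLp_neg_self_zero_sub (s t : ℝ) :
    (WithLp.toLp 1 ![-s, s, 0] : V3) - WithLp.toLp 1 ![-t, t, 0] =
      WithLp.toLp 1 ![-(s - t), s - t, 0] := by
  ext i
  fin_cases i <;> simp [neg_add_eq_sub]

theorem abs_fhatAmp_le {ω c : ℝ} {k : ℝ → ℝ → ℝ} {Ξ : ℝ → ℝ} (hbdd : ∀ z, |Ξ z| ≤ c)
    (g : ℝ → V3) (a : ℝ) : |fhatAmp ω k Ξ g a| ≤ c * ‖g a‖ := by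
  rw [fhatAmp, abs_mul]
  exact mul_le_mul (hbdd _) (PiLp.norm_apply_le (g a) 0) (abs_nonneg _)
    ((abs_nonneg _).trans (hbdd 0))

theorem abs_fhatAmp_sub_le {ω c B : ℝ} {k : ℝ → ℝ → ℝ} {Ξ : ℝ → ℝ} {L : NNReal}
    (hbdd : ∀ z, |Ξ z| ≤ c) (hlip : LipschitzWith L Ξ) {ψ φ : ℝ → V3} {a : ℝ}
    (hΛ : |Lam ω k (fun σ => ψ σ 1) a - Lam ω k (fun σ => φ σ 1) a| ≤ B) :
    |fhatAmp ω k Ξ ψ a - fhatAmp ω k Ξ φ a| ≤ c * ‖ψ a - φ a‖ + L * B * ‖φ a‖ := by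
  refine (abs_mul_sub_mul_le_of_lipschitzWith hbdd hlip _ _ _ _).trans ?_
  have hc : 0 ≤ c := (abs_nonneg _).trans (hbdd 0)
  gcongr
  · exact PiLp.norm_apply_le (ψ a - φ a) 0
  · exact mul_nonneg L.2 ((abs_nonneg _).trans hΛ)
  · exact PiLp.norm_apply_le (φ a) 0

theorem norm_fhat_le {ω c : ℝ} {k : ℝ → ℝ → ℝ} {Ξ : ℝ → ℝ} {F : XX ω → XX ω}
    (hF : ∀ ψ : XX ω, ∀ᵐ a ∂(volume.restrict (Icc (0:ℝ) ω)),
      ∀ i : Fin 3, (F ψ) a i = fhatval ω k Ξ (⇑ψ) a i)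
    (hbdd : ∀ z, |Ξ z| ≤ c) (ψ : XX ω) : ‖F ψ‖ ≤ 2 * c * ‖ψ‖ := by
  refine (L1.norm_le_integral_of_ae_norm_le ((L1.integrable_coeFn ψ).norm.const_mul (2 * c))
    ?_).trans_eq (by rw [integral_const_mul, L1.norm_eq_integral_norm])
  filter_upwards [ae_eq_toLp_fhatAmp hF ψ] with a ha
  rw [ha, norm_toLp_neg_self_zero, mul_assoc]
  exact mul_le_mul_of_nonneg_left (abs_fhatAmp_le hbdd _ a) zero_le_two

theorem norm_fhat_sub_le {ω c M : ℝ} {k : ℝ → ℝ → ℝ} {Ξ : ℝ → ℝ} {L : NNReal}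
    {F : XX ω → XX ω}
    (hF : ∀ ψ : XX ω, ∀ᵐ a ∂(volume.restrict (Icc (0:ℝ) ω)),
      ∀ i : Fin 3, (F ψ) a i = fhatval ω k Ξ (⇑ψ) a i)
    (hbdd : ∀ z, |Ξ z| ≤ c) (hlip : LipschitzWith L Ξ) (hkm : ∀ a, Measurable (k a))
    (hM : 0 ≤ M) (hk : ∀ᵐ a ∂(volume.restrict (Icc (0:ℝ) ω)),
      ∀ᵐ σ ∂(volume.restrict (Icc (0:ℝ) ω)), |k a σ| ≤ M) (ψ φ : XX ω) :
    ‖F ψ - F φ‖ ≤ 2 * c * ‖ψ - φ‖ + 2 * L * M * ‖ψ - φ‖ * ‖φ‖ := by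
  have hint : Integrable (fun a => 2 * c * ‖(ψ - φ) a‖ + 2 * L * M * ‖ψ - φ‖ * ‖φ a‖)
      (volume.restrict (Icc (0:ℝ) ω)) :=
    ((L1.integrable_coeFn _).norm.const_mul _).add ((L1.integrable_coeFn _).norm.const_mul _)
  refine (L1.norm_le_integral_of_ae_norm_le hint ?_).trans_eq ?_
  · filter_upwards [hk, ae_eq_toLp_fhatAmp hF ψ, ae_eq_toLp_fhatAmp hF φ,
      Lp.coeFn_sub (F ψ) (F φ), Lp.coeFn_sub ψ φ] with a hka hψ hφ hFsub hsub
    rw [hFsub, Pi.sub_apply, hψ, hφ, toLp_neg_self_zero_sub, norm_toLp_neg_self_zero, hsub,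
      Pi.sub_apply]
    have := abs_fhatAmp_sub_le hbdd hlip (abs_Lam_sub_le hM (hkm a) hka ψ φ)
    linarith
  · rw [integral_add ((L1.integrable_coeFn _).norm.const_mul _)
      ((L1.integrable_coeFn _).norm.const_mul _), integral_const_mul, integral_const_mul,
      ← L1.norm_eq_integral_norm, ← L1.norm_eq_integral_norm]

theorem fhat_growth_lipschitz_general (ω : ℝ) (hω : 0 < ω)
    (k : ℝ → ℝ → ℝ) (Mk : ℝ)
    (hkmeas : Measurable (Function.uncurry k)) (hMk : IsEssSupSq ω k Mk)
    (c : ℝ)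
    (Ξ : ℝ → ℝ) (hΞdiff : Differentiable ℝ Ξ)
    (hΞbdd : ∀ z : ℝ, |Ξ z| ≤ c)
    (hΞ' : ∀ z : ℝ, 0 ≤ deriv Ξ z ∧ deriv Ξ z ≤ 2)
    (F : XX ω → XX ω)
    (hF : ∀ ψ : XX ω, ∀ᵐ a ∂(volume.restrict (Icc (0:ℝ) ω)),
      ∀ i : Fin 3, (F ψ) a i = fhatval ω k Ξ (⇑ψ) a i) :
    (∀ ψ : XX ω, ‖F ψ‖ ≤ 2 * c * ‖ψ‖) ∧
    (∀ ρ : ℝ, 0 < ρ → ∀ ψ φ : XX ω, ‖φ‖ ≤ ρ →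
      ‖F ψ - F φ‖ ≤ 2 * (c + 2 * ρ * Mk) * ‖ψ - φ‖) := by
  have hlip : LipschitzWith 2 Ξ := lipschitzWith_of_nnnorm_deriv_le hΞdiff fun z => by
    rw [← NNReal.coe_le_coe, coe_nnnorm, Real.norm_eq_abs, abs_of_nonneg (hΞ' z).1]
    exact_mod_cast (hΞ' z).2
  have hk := Measure.ae_ae_of_ae_prod hMk.1
  have : NeZero (volume (Icc (0:ℝ) ω)) := ⟨by simp [hω]⟩
  have hMk0 : 0 ≤ Mk := let ⟨_, ha⟩ := hk.exists; nonneg_of_ae_abs_le ha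
  have hkm (a : ℝ) : Measurable (k a) := hkmeas.comp measurable_prodMk_left
  refine ⟨norm_fhat_le hF hΞbdd, fun ρ _ ψ φ hφ => ?_⟩
  calc ‖F ψ - F φ‖ ≤ 2 * c * ‖ψ - φ‖ + 2 * 2 * Mk * ‖ψ - φ‖ * ‖φ‖ := by
        exact_mod_cast norm_fhat_sub_le hF hΞbdd hlip hkm hMk0 hk ψ φ
    _ ≤ 2 * (c + 2 * ρ * Mk) * ‖ψ - φ‖ := by
        linarith [mul_le_mul_of_nonneg_left hφ (mul_nonneg hMk0 (norm_nonneg (ψ - φ)))]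

/-- under (H3), with `Ξ` as above and `F : X → X` realizing the truncated
nonlinearity `f̂`, one has (i) the sublinear growth `‖f̂(ψ)‖₁ ≤ 2c‖ψ‖₁` for all `ψ ∈ X`,
and (ii) for every `ρ > 0` the local Lipschitz estimate
`‖f̂(ψ) − f̂(φ)‖₁ ≤ C_ρ‖ψ − φ‖₁` with `C_ρ = 2(c + 2ρ‖k‖_∞)` whenever `‖φ‖₁ ≤ ρ`. -/
theorem fhat_growth_lipschitz (ω : ℝ) (hω : 0 < ω)
    (k : ℝ → ℝ → ℝ) (Mk : ℝ)
    (hkmeas : Measurable (Function.uncurry k)) (hMk : IsEssSupSq ω k Mk)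
    (hkpos : ∀ᵐ z ∂((volume.restrict (Icc (0:ℝ) ω)).prod (volume.restrict (Icc (0:ℝ) ω))),
      0 ≤ k z.1 z.2)
    (c : ℝ) (hc : 0 < c)
    (Ξ : ℝ → ℝ) (hΞdiff : Differentiable ℝ Ξ) (hΞderiv : Continuous (deriv Ξ))
    (hΞbdd : ∀ z : ℝ, |Ξ z| ≤ c)
    (hΞ' : ∀ z : ℝ, 0 ≤ deriv Ξ z ∧ deriv Ξ z ≤ 2)
    (F : XX ω → XX ω)
    (hF : ∀ ψ : XX ω, ∀ᵐ a ∂(volume.restrict (Icc (0:ℝ) ω)),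
      ∀ i : Fin 3, (F ψ) a i = fhatval ω k Ξ (⇑ψ) a i) :
    (∀ ψ : XX ω, ‖F ψ‖ ≤ 2 * c * ‖ψ‖) ∧
    (∀ ρ : ℝ, 0 < ρ → ∀ ψ φ : XX ω, ‖φ‖ ≤ ρ →
      ‖F ψ - F φ‖ ≤ 2 * (c + 2 * ρ * Mk) * ‖ψ - φ‖) :=
  fhat_growth_lipschitz_general ω hω k Mk hkmeas hMk c Ξ hΞdiff hΞbdd hΞ' F hF
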